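/- arXiv:2102.06783 — 7 statements merged into one kernel-verified Lean document; each statement's English description precedes it below -/
import Mathlib

section
/- Let F be a temporally transitive orientation of a temporal graph (G,λ), and let A be a Λ-implication class. Then either A ⊆ F or A^{-1} ⊆ F, and in either case A ∩ A^{-1} = ∅. -/
/-- The temporal forcing relation Λ on directed edges. -/
def Step {V : Type*} (E : V → V → Prop) (lam : V → V → ℕ) (p q : V × V) : Prop :=
  E p.1 p.2 ∧ E q.1 q.2 ∧ lam p.1 p.2 = lam q.1 q.2 ∧
    ((p.1 = q.1 ∧ ¬ E p.2 q.2) ∨ (p.2 = q.2 ∧ ¬ E p.1 q.1) ∨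
     (p.1 = q.1 ∧ E p.2 q.2 ∧ lam p.2 q.2 < lam p.1 p.2) ∨
     (p.2 = q.2 ∧ E p.1 q.1 ∧ lam p.1 q.1 < lam p.1 p.2))

lemma step_symm {V : Type*} {E : V → V → Prop} {lam : V → V → ℕ}
    (hEsymm : ∀ u v, E u v → E v u) (hlam : ∀ u v, lam u v = lam v u)
    {p q : V × V} (h : Step E lam p q) : Step E lam q p := by
  obtain ⟨h1, h2, h3, hc⟩ := h
  refine ⟨h2, h1, h3.symm, ?_⟩
  rcases hc with ⟨e1, e2⟩ | ⟨e1, e2⟩ | ⟨e1, e2, e3⟩ | ⟨e1, e2, e3⟩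
  · exact Or.inl ⟨e1.symm, fun h => e2 (hEsymm _ _ h)⟩
  · exact Or.inr (Or.inl ⟨e1.symm, fun h => e2 (hEsymm _ _ h)⟩)
  · exact Or.inr (Or.inr (Or.inl ⟨e1.symm, hEsymm _ _ e2, by rw [hlam q.2 p.2, ← h3]; exact e3⟩))
  · exact Or.inr (Or.inr (Or.inr ⟨e1.symm, hEsymm _ _ e2, by rw [hlam q.1 p.1, ← h3]; exact e3⟩))

lemma step_force {V : Type*} {E : V → V → Prop} {lam : V → V → ℕ} {F : V → V → Prop}
    (hEsymm : ∀ u v, E u v → E v u)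
    (hlam : ∀ u v, lam u v = lam v u)
    (hFE : ∀ u v, F u v → E u v)
    (hproper : ∀ u v, E u v → (F u v ↔ ¬ F v u))
    (htrans : ∀ u v w, F u v → F v w → lam u v ≤ lam v w →
      F u w ∧ lam v w ≤ lam u w)
    {p q : V × V} (h : Step E lam p q) (hFp : F p.1 p.2) : F q.1 q.2 := by
  obtain ⟨hEp, hEq, heq, hc⟩ := h
  by_contra hn
  have hF' : F q.2 q.1 := (hproper q.2 q.1 (hEsymm _ _ hEq)).mpr hn
  rcases hc with ⟨e1, e2⟩ | ⟨e1, e2⟩ | ⟨e1, e2, e3⟩ | ⟨e1, e2, e3⟩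
  · -- p.1 = q.1, ¬ E p.2 q.2
    have hF'' : F q.2 p.1 := by rwa [← e1] at hF'
    have a1 : lam q.2 p.1 = lam q.1 q.2 := by rw [hlam, e1]
    have := htrans q.2 p.1 p.2 hF'' hFp (by omega)
    exact e2 (hEsymm _ _ (hFE _ _ this.1))
  · -- p.2 = q.2, ¬ E p.1 q.1
    have hF'' : F p.2 q.1 := by rwa [← e1] at hF'
    have a1 : lam p.2 q.1 = lam q.1 q.2 := by rw [hlam p.2 q.1, e1]
    have := htrans p.1 p.2 q.1 hFp hF'' (by omega)
    exact e2 (hFE _ _ this.1)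
  · -- p.1 = q.1, E p.2 q.2, lam p.2 q.2 < lam p.1 p.2
    have hF'' : F q.2 p.1 := by rwa [← e1] at hF'
    have a1 : lam q.2 p.1 = lam q.1 q.2 := by rw [hlam, e1]
    have := htrans q.2 p.1 p.2 hF'' hFp (by omega)
    have h4 : lam q.2 p.2 = lam p.2 q.2 := hlam _ _
    omega
  · -- p.2 = q.2, E p.1 q.1, lam p.1 q.1 < lam p.1 p.2
    have hF'' : F p.2 q.1 := by rwa [← e1] at hF'
    have a1 : lam p.2 q.1 = lam q.1 q.2 := by rw [hlam p.2 q.1, e1]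
    have := htrans p.1 p.2 q.1 hFp hF'' (by omega)
    omega

/-- For a temporally transitive orientation F and a Λ-implication class A,
either A ⊆ F or A⁻¹ ⊆ F, and in either case A ∩ A⁻¹ = ∅. -/
theorem implication_class_oriented {V : Type*} (E : V → V → Prop) (lam : V → V → ℕ)
    (F : V → V → Prop)
    (hEsymm : ∀ u v, E u v → E v u) (hEirr : ∀ v, ¬ E v v)
    (hlam : ∀ u v, lam u v = lam v u)
    (hFE : ∀ u v, F u v → E u v)
    (hproper : ∀ u v, E u v → (F u v ↔ ¬ F v u))
    (htrans : ∀ u v w, F u v → F v w → lam u v ≤ lam v w →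
      F u w ∧ lam v w ≤ lam u w)
    (A : Set (V × V))
    (hA : ∃ e : V × V, E e.1 e.2 ∧
      A = {p | Relation.ReflTransGen (Step E lam) e p}) :
    ((∀ p ∈ A, F p.1 p.2) ∨ (∀ p ∈ A, F p.2 p.1)) ∧
      A ∩ (Prod.swap ⁻¹' A) = ∅ := by
  obtain ⟨e, hEe, rfl⟩ := hA
  -- along the chain, F is preserved both ways
  have key : ∀ p : V × V, Relation.ReflTransGen (Step E lam) e p →
      (F p.1 p.2 ↔ F e.1 e.2) ∧ E p.1 p.2 := by
    intro p hp
    induction hp with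
    | refl => exact ⟨Iff.rfl, hEe⟩
    | tail _ hstep ih =>
      refine ⟨?_, hstep.2.1⟩
      rw [← ih.1]
      constructor
      · intro h
        exact step_force hEsymm hlam hFE hproper htrans
          (step_symm hEsymm hlam hstep) h
      · intro h
        exact step_force hEsymm hlam hFE hproper htrans hstep h
  constructor
  · by_cases hFe : F e.1 e.2
    · left; intro p hp; exact ((key p hp).1).mpr hFe
    · right; intro p hp
      have hEp := (key p hp).2
      have : ¬ F p.1 p.2 := fun h => hFe (((key p hp).1).mp h)
      exact (hproper p.2 p.1 (hEsymm _ _ hEp)).mpr this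
  · ext p
    simp only [Set.mem_inter_iff, Set.mem_preimage, Set.mem_setOf_eq, Set.mem_empty_iff_false,
      iff_false]
    rintro ⟨hp, hps⟩
    have h1 := key p hp
    have h2 := key p.swap hps
    simp only [Prod.fst_swap, Prod.snd_swap] at h2
    by_cases hFe : F e.1 e.2
    · exact (hproper p.1 p.2 h1.2).mp (h1.1.mpr hFe) (h2.1.mpr hFe)
    · have hn1 : ¬ F p.1 p.2 := fun h => hFe (h1.1.mp h)
      have hn2 : ¬ F p.2 p.1 := fun h => hFe (h2.1.mp h)
      exact hn1 ((hproper p.1 p.2 h1.2).mpr hn2)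
end

section
/- In any temporally transitive orientation F of a temporal graph (G,λ), if uv Λ u'v' (single forcing step) and uv ∈ F, then u'v' ∈ F. -/
/-- In a temporally transitive orientation, a single Λ-forcing step preserves
membership in F. -/
theorem forcing_step {V : Type*} (E : V → V → Prop) (lam : V → V → ℕ)
    (F : V → V → Prop)
    (hEsymm : ∀ u v, E u v → E v u) (hEirr : ∀ v, ¬ E v v)
    (hlam : ∀ u v, lam u v = lam v u)
    (hFE : ∀ u v, F u v → E u v)
    (hproper : ∀ u v, E u v → (F u v ↔ ¬ F v u))
    (htrans : ∀ u v w, F u v → F v w → lam u v ≤ lam v w →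
      F u w ∧ lam v w ≤ lam u w)
    (u v u' v' : V) (hstep : Step E lam (u, v) (u', v')) (hF : F u v) :
    F u' v' := by
  obtain ⟨hE1, hE2, hleq, hcase⟩ := hstep
  simp only at hE1 hE2 hleq hcase
  by_contra hnF
  have hFrev : F v' u' := by
    have := hproper u' v' hE2
    tauto
  rcases hcase with ⟨hu, hnE⟩ | ⟨hv, hnE⟩ | ⟨hu, hEvv, hlt⟩ | ⟨hv, hEuu, hlt⟩
  · subst hu
    have h1 : lam v' u ≤ lam u v := by rw [hlam v' u, ← hleq]
    have := htrans v' u v hFrev hF h1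
    exact hnE (hEsymm v' v (hFE v' v this.1))
  · subst hv
    have h1 : lam u v ≤ lam v u' := by rw [hlam v u', hleq]
    have := htrans u v u' hF hFrev h1
    exact hnE (hFE u u' this.1)
  · subst hu
    have h1 : lam v' u ≤ lam u v := by rw [hlam v' u, ← hleq]
    have ⟨h2, h3⟩ := htrans v' u v hFrev hF h1
    rw [hlam v' v] at h3
    omega
  · subst hv
    have h1 : lam u v ≤ lam v u' := by rw [hlam v u', hleq]
    have ⟨h2, h3⟩ := htrans u v u' hF hFrev h1
    rw [hlam v u'] at h3
    omega
end

section
/- Let (G,λ) be a temporal graph containing vertices u,v,w with {u,v},{v,w} ∈ E, {u,w} ∉ E, and λ(u,v) = λ(v,w). Then in every temporally transitive orientation F of (G,λ), uv ∈ F if and only if wv ∈ F. -/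
/-- In an induced path u-v-w with equal labels, uv ∈ F iff wv ∈ F in every
temporally transitive orientation. -/
theorem path_equal_labels {V : Type*} (E : V → V → Prop) (lam : V → V → ℕ)
    (F : V → V → Prop)
    (hEsymm : ∀ x y, E x y → E y x) (hlam : ∀ x y, lam x y = lam y x)
    (hFE : ∀ x y, F x y → E x y)
    (hproper : ∀ x y, E x y → (F x y ↔ ¬ F y x))
    (htrans : ∀ a b c, F a b → F b c → lam a b ≤ lam b c →
      E a c ∧ F a c ∧ lam b c ≤ lam a c)
    (u v w : V) (huv : E u v) (hvw : E v w) (huw : ¬ E u w)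
    (hll : lam u v = lam v w) :
    F u v ↔ F w v := by
  constructor
  · intro hfuv
    rw [hproper w v (hEsymm v w hvw)]
    intro hfvw
    exact huw (htrans u v w hfuv hfvw (le_of_eq hll)).1
  · intro hfwv
    rw [hproper u v huv]
    intro hfvu
    have : lam w v ≤ lam v u := by rw [hlam w v, hlam v u, hll]
    exact huw (hEsymm w u (htrans w v u hfwv hfvu this).1)
end

section
/- Let (G,λ) be a temporal graph containing a triangle on vertices u,v,w with λ(u,v) < λ(v,w) = λ(w,u). Then in every temporally transitive orientation F of (G,λ), wu ∈ F if and only if wv ∈ F. -/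
/-- In a triangle with λ(u,v) < λ(v,w) = λ(w,u): in every temporally
transitive orientation, wu ∈ F iff wv ∈ F. -/
theorem triangle_t1_lt_t2_eq_t3 {V : Type*} (E : V → V → Prop) (lam : V → V → ℕ)
    (F : V → V → Prop)
    (hEsymm : ∀ x y, E x y → E y x) (hlam : ∀ x y, lam x y = lam y x)
    (hFE : ∀ x y, F x y → E x y)
    (hproper : ∀ x y, E x y → (F x y ↔ ¬ F y x))
    (htrans : ∀ a b c, F a b → F b c → lam a b ≤ lam b c →
      E a c ∧ F a c ∧ lam b c ≤ lam a c)
    (u v w : V) (huv : E u v) (hvw : E v w) (hwu : E w u)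
    (h1 : lam u v < lam v w) (h2 : lam v w = lam w u) :
    F w u ↔ F w v := by
  constructor
  · intro hwuF
    by_contra hwvF
    have hvwF : F v w := by
      have := hproper v w hvw
      by_contra h
      exact hwvF ((hproper w v (hEsymm v w hvw)).mpr (fun hv => h hv))
    have hle : lam v w ≤ lam w u := le_of_eq h2
    obtain ⟨_, hvu, hge⟩ := htrans v w u hvwF hwuF hle
    have : lam v u = lam u v := hlam v u
    omega
  · intro hwvF
    by_contra hwuF
    have huwF : F u w := by
      by_contra h
      exact hwuF ((hproper w u hwu).mpr (fun hu => h hu))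
    have hle : lam u w ≤ lam w v := by
      have := hlam u w; have := hlam w v; omega
    obtain ⟨_, huv', hge⟩ := htrans u w v huwF hwvF hle
    have := hlam w v
    omega
end

section
/- Let (G,λ) be a temporal graph containing a triangle on vertices u,v,w with λ(u,v) ≤ λ(v,w) < λ(w,u). Then in every temporally transitive orientation F of (G,λ): if vw ∈ F then uw ∈ F, and if vu ∈ F then wu ∈ F. -/
/-- In a triangle with λ(u,v) ≤ λ(v,w) < λ(w,u): in every temporally
transitive orientation, vw ∈ F implies uw ∈ F, and vu ∈ F implies wu ∈ F. -/
theorem triangle_t2_lt_t3 {V : Type*} (E : V → V → Prop) (lam : V → V → ℕ)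
    (F : V → V → Prop)
    (hEsymm : ∀ x y, E x y → E y x) (hlam : ∀ x y, lam x y = lam y x)
    (hFE : ∀ x y, F x y → E x y)
    (hproper : ∀ x y, E x y → (F x y ↔ ¬ F y x))
    (htrans : ∀ a b c, F a b → F b c → lam a b ≤ lam b c →
      E a c ∧ F a c ∧ lam b c ≤ lam a c)
    (u v w : V) (huv : E u v) (hvw : E v w) (hwu : E w u)
    (h1 : lam u v ≤ lam v w) (h2 : lam v w < lam w u) :
    (F v w → F u w) ∧ (F v u → F w u) := by
  constructor
  · intro hFvw
    by_contra hnuw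
    have hFwu : F w u := by
      have := hproper w u hwu
      tauto
    have hle : lam v w ≤ lam w u := le_of_lt h2
    obtain ⟨_, _, hge⟩ := htrans v w u hFvw hFwu hle
    have : lam v u = lam u v := hlam v u
    omega
  · intro hFvu
    by_contra hnwu
    have hFuw : F u w := by
      have := hproper u w (hEsymm w u hwu)
      have h' := hproper w u hwu
      tauto
    have hle : lam v u ≤ lam u w := by
      have e1 := hlam v u
      have e2 := hlam u w
      omega
    obtain ⟨_, _, hge⟩ := htrans v u w hFvu hFuw hle
    have e2 := hlam u w
    omega
end

section
/- Consider the temporal graph that is a cycle on eight vertices a, a', b, b', c, c', d, d' (in this cyclic order) whose edges alternate between time-labels 1 and 2 (edges {a,a'},{b,b'},{c,c'},{d,d'} have label 1, and edges {a',b},{b',c},{c',d},{d',a} have label 2). Then every strictly temporally transitive orientation of this temporal graph orients the edges alternately, i.e., every vertex is either a source or a sink; in particular there are exactly two strictly temporally transitive orientations. -/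
/-- The 8-cycle with edges {i, i+1} over ZMod 8. -/
def cycE (i j : ZMod 8) : Prop := j = i + 1 ∨ i = j + 1

/-- Labels alternating 1, 2 around the 8-cycle: the edge {i, i+1} has label 1
if i is even and label 2 if i is odd. -/
noncomputable def cycLam (i j : ZMod 8) : ℕ :=
  if (j = i + 1 ∧ i.val % 2 = 0) ∨ (i = j + 1 ∧ j.val % 2 = 0) then 1 else 2

def cycProper (F : ZMod 8 → ZMod 8 → Prop) : Prop :=
  (∀ i j, F i j → cycE i j) ∧ ∀ i j, cycE i j → (F i j ↔ ¬ F j i)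

def cycStrict (F : ZMod 8 → ZMod 8 → Prop) : Prop :=
  ∀ u v w, F u v → F v w → cycLam u v < cycLam v w →
    cycE u w ∧ F u w ∧ cycLam v w ≤ cycLam u w

/-- The orientation where every even vertex is a source. -/
def G₁ (i j : ZMod 8) : Prop := (j = i + 1 ∧ i.val % 2 = 0) ∨ (i = j + 1 ∧ j.val % 2 = 1)

/-- The orientation where every odd vertex is a source. -/
def G₂ (i j : ZMod 8) : Prop := (j = i + 1 ∧ i.val % 2 = 1) ∨ (i = j + 1 ∧ j.val % 2 = 0)

lemma dne2 : ∀ i : ZMod 8, ¬ cycE i (i + 1 + 1) := by unfold cycE; decide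
lemma dne2' : ∀ i : ZMod 8, ¬ cycE (i + 1 + 1) i := by unfold cycE; decide
lemma dl1 : ∀ i : ZMod 8, i.val % 2 = 0 → cycLam i (i + 1) = 1 := by
  unfold cycLam; decide
lemma dl2 : ∀ i : ZMod 8, i.val % 2 = 0 → cycLam (i + 1) (i + 1 + 1) = 2 := by
  unfold cycLam; decide
lemma dl3 : ∀ i : ZMod 8, i.val % 2 = 1 → cycLam (i + 1) i = 2 := by
  unfold cycLam; decide
lemma dl4 : ∀ i : ZMod 8, i.val % 2 = 1 → cycLam (i + 1 + 1) (i + 1) = 1 := by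
  unfold cycLam; decide
lemma dG1f : ∀ i : ZMod 8, G₁ i (i + 1) ↔ i.val % 2 = 0 := by unfold G₁; decide
lemma dG1b : ∀ j : ZMod 8, G₁ (j + 1) j ↔ j.val % 2 = 1 := by unfold G₁; decide
lemma dG2f : ∀ i : ZMod 8, G₂ i (i + 1) ↔ i.val % 2 = 1 := by unfold G₂; decide
lemma dG2b : ∀ j : ZMod 8, G₂ (j + 1) j ↔ j.val % 2 = 0 := by unfold G₂; decide
lemma dpar0 : ∀ j : ZMod 8, (¬ j.val % 2 = 0) ↔ j.val % 2 = 1 := by decide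
lemma dpar1 : ∀ j : ZMod 8, (¬ j.val % 2 = 1) ↔ j.val % 2 = 0 := by decide
lemma dcases8 : ∀ i : ZMod 8,
    i = 0 ∨ i = 1 ∨ i = 2 ∨ i = 3 ∨ i = 4 ∨ i = 5 ∨ i = 6 ∨ i = 7 := by decide

lemma uniq (F : ZMod 8 → ZMod 8 → Prop) (hP : cycProper F) (hS : cycStrict F) :
    F = G₁ ∨ F = G₂ := by
  obtain ⟨hE, hProp⟩ := hP
  -- no u-v-w path with strictly increasing labels when u,w are not adjacent
  have key : ∀ u v w : ZMod 8, ¬ cycE u w → F u v → F v w → cycLam v w ≤ cycLam u v := by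
    intro u v w h hu hv
    by_contra hlt
    exact h (hS u v w hu hv (lt_of_not_ge hlt)).1
  -- at an even-start edge: not both consecutive edges forward
  have c : ∀ i j k : ZMod 8, j = i + 1 → k = j + 1 → i.val % 2 = 0 →
      ¬ (F i j ∧ F j k) := by
    intro i j k hj hk hpar ⟨h1, h2⟩
    subst hj; subst hk
    have := key i (i + 1) (i + 1 + 1) (dne2 i) h1 h2
    have l1 := dl1 i hpar
    have l2 := dl2 i hpar
    omega
  -- at an odd-start edge: not both consecutive edges backward
  have c' : ∀ i j k : ZMod 8, j = i + 1 → k = j + 1 → i.val % 2 = 1 →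
      F i j ∨ F j k := by
    intro i j k hj hk hpar
    by_contra hcon
    push_neg at hcon
    obtain ⟨h1, h2⟩ := hcon
    subst hj; subst hk
    have e1 : cycE i (i + 1) := Or.inl rfl
    have e2 : cycE (i + 1) (i + 1 + 1) := Or.inl rfl
    have b1 : F (i + 1) i := by have := hProp i (i + 1) e1; tauto
    have b2 : F (i + 1 + 1) (i + 1) := by have := hProp (i + 1) (i + 1 + 1) e2; tauto
    have := key (i + 1 + 1) (i + 1) i (dne2' i) b2 b1
    have l1 := dl3 i hpar
    have l2 := dl4 i hpar
    omega
  by_cases h0 : F 0 1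
  · left
    have n1 : ¬ F 1 2 := fun h => c 0 1 2 (by decide) (by decide) (by decide) ⟨h0, h⟩
    have x2 : F 2 3 := (c' 1 2 3 (by decide) (by decide) (by decide)).resolve_left n1
    have n3 : ¬ F 3 4 := fun h => c 2 3 4 (by decide) (by decide) (by decide) ⟨x2, h⟩
    have x4 : F 4 5 := (c' 3 4 5 (by decide) (by decide) (by decide)).resolve_left n3
    have n5 : ¬ F 5 6 := fun h => c 4 5 6 (by decide) (by decide) (by decide) ⟨x4, h⟩
    have x6 : F 6 7 := (c' 5 6 7 (by decide) (by decide) (by decide)).resolve_left n5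
    have n7 : ¬ F 7 0 := fun h => c 6 7 0 (by decide) (by decide) (by decide) ⟨x6, h⟩
    have hx : ∀ i : ZMod 8, F i (i + 1) ↔ i.val % 2 = 0 := by
      intro i
      rcases dcases8 i with rfl | rfl | rfl | rfl | rfl | rfl | rfl | rfl
      · rw [show (0 : ZMod 8) + 1 = 1 by decide]; exact iff_of_true h0 (by decide)
      · rw [show (1 : ZMod 8) + 1 = 2 by decide]; exact iff_of_false n1 (by decide)
      · rw [show (2 : ZMod 8) + 1 = 3 by decide]; exact iff_of_true x2 (by decide)
      · rw [show (3 : ZMod 8) + 1 = 4 by decide]; exact iff_of_false n3 (by decide)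
      · rw [show (4 : ZMod 8) + 1 = 5 by decide]; exact iff_of_true x4 (by decide)
      · rw [show (5 : ZMod 8) + 1 = 6 by decide]; exact iff_of_false n5 (by decide)
      · rw [show (6 : ZMod 8) + 1 = 7 by decide]; exact iff_of_true x6 (by decide)
      · rw [show (7 : ZMod 8) + 1 = 0 by decide]; exact iff_of_false n7 (by decide)
    funext i j
    apply propext
    by_cases hij : cycE i j
    · rcases hij with rfl | rfl
      · exact (hx i).trans (dG1f i).symm
      · have hp := hProp j (j + 1) (Or.inl rfl)
        have h1 : F (j + 1) j ↔ j.val % 2 = 1 := by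
          rw [← dpar0 j, ← hx j]; tauto
        exact h1.trans (dG1b j).symm
    · exact iff_of_false (fun h => hij (hE i j h))
        (fun h => hij (by unfold G₁ at h; unfold cycE; tauto))
  · right
    have x7 : F 7 0 := (c' 7 0 1 (by decide) (by decide) (by decide)).resolve_right h0
    have n6 : ¬ F 6 7 := fun h => c 6 7 0 (by decide) (by decide) (by decide) ⟨h, x7⟩
    have x5 : F 5 6 := (c' 5 6 7 (by decide) (by decide) (by decide)).resolve_right n6
    have n4 : ¬ F 4 5 := fun h => c 4 5 6 (by decide) (by decide) (by decide) ⟨h, x5⟩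
    have x3 : F 3 4 := (c' 3 4 5 (by decide) (by decide) (by decide)).resolve_right n4
    have n2 : ¬ F 2 3 := fun h => c 2 3 4 (by decide) (by decide) (by decide) ⟨h, x3⟩
    have x1 : F 1 2 := (c' 1 2 3 (by decide) (by decide) (by decide)).resolve_right n2
    have hx : ∀ i : ZMod 8, F i (i + 1) ↔ i.val % 2 = 1 := by
      intro i
      rcases dcases8 i with rfl | rfl | rfl | rfl | rfl | rfl | rfl | rfl
      · rw [show (0 : ZMod 8) + 1 = 1 by decide]; exact iff_of_false h0 (by decide)
      · rw [show (1 : ZMod 8) + 1 = 2 by decide]; exact iff_of_true x1 (by decide)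
      · rw [show (2 : ZMod 8) + 1 = 3 by decide]; exact iff_of_false n2 (by decide)
      · rw [show (3 : ZMod 8) + 1 = 4 by decide]; exact iff_of_true x3 (by decide)
      · rw [show (4 : ZMod 8) + 1 = 5 by decide]; exact iff_of_false n4 (by decide)
      · rw [show (5 : ZMod 8) + 1 = 6 by decide]; exact iff_of_true x5 (by decide)
      · rw [show (6 : ZMod 8) + 1 = 7 by decide]; exact iff_of_false n6 (by decide)
      · rw [show (7 : ZMod 8) + 1 = 0 by decide]; exact iff_of_true x7 (by decide)
    funext i j
    apply propext
    by_cases hij : cycE i j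
    · rcases hij with rfl | rfl
      · exact (hx i).trans (dG2f i).symm
      · have hp := hProp j (j + 1) (Or.inl rfl)
        have h1 : F (j + 1) j ↔ j.val % 2 = 0 := by
          rw [← dpar1 j, ← hx j]; tauto
        exact h1.trans (dG2b j).symm
    · exact iff_of_false (fun h => hij (hE i j h))
        (fun h => hij (by unfold G₂ at h; unfold cycE; tauto))

lemma propG1 : cycProper G₁ := by unfold cycProper cycE G₁; decide
lemma strictG1 : cycStrict G₁ := by unfold cycStrict cycE cycLam G₁; decide
lemma propG2 : cycProper G₂ := by unfold cycProper cycE G₂; decide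
lemma strictG2 : cycStrict G₂ := by unfold cycStrict cycE cycLam G₂; decide

lemma altG1 : ∀ v : ZMod 8, (∀ u, cycE u v → G₁ v u) ∨ (∀ u, cycE u v → G₁ u v) := by
  unfold cycE G₁; decide

lemma altG2 : ∀ v : ZMod 8, (∀ u, cycE u v → G₂ v u) ∨ (∀ u, cycE u v → G₂ u v) := by
  unfold cycE G₂; decide

/-- Every strictly temporally transitive orientation of the alternating 8-cycle
orients the edges alternately (every vertex is a source or a sink), and there
are exactly two such orientations. -/
theorem eight_cycle_orientations :
    (∀ F : ZMod 8 → ZMod 8 → Prop, cycProper F → cycStrict F →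
      ∀ v, (∀ u, cycE u v → F v u) ∨ (∀ u, cycE u v → F u v)) ∧
    (∃ F₁ F₂ : ZMod 8 → ZMod 8 → Prop, F₁ ≠ F₂ ∧
      (cycProper F₁ ∧ cycStrict F₁) ∧ (cycProper F₂ ∧ cycStrict F₂) ∧
      ∀ F, cycProper F → cycStrict F → F = F₁ ∨ F = F₂) := by
  constructor
  · intro F hP hS
    rcases uniq F hP hS with rfl | rfl
    · exact altG1
    · exact altG2
  · refine ⟨G₁, G₂, ?_, ⟨propG1, strictG1⟩, ⟨propG2, strictG2⟩, uniq⟩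
    intro h
    have h01 : G₂ 0 1 := h ▸ (show G₁ 0 1 by unfold G₁; decide)
    exact (show ¬ G₂ 0 1 by unfold G₂; decide) h01
end

section
/- Let (G,λ) be a temporal graph with a fixed proper orientation F of all its edges, and let G' = (V,F) be the resulting directed graph. Suppose (G,λ) together with F can be completed to a temporally transitive temporal graph by adding a set X of new oriented time-edges (on vertex pairs not in E). If G' contains a tail-heavy directed path of length at least 2 from v to u whose last edge has label T, then the completed temporal graph contains an oriented edge from v to u with time-label at least T. -/
/-- If a fully oriented temporal graph (E, lam, F) is completed (by adding new
time-edges on vertex pairs not in E) to a temporally transitively oriented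
temporal graph (E', lam', F'), and the directed graph (V, F) contains a
tail-heavy directed path of length at least 2 from v to u whose last edge has
label T, then the completed graph contains the oriented edge vu with label at
least T. -/
theorem completion_tail_heavy {V : Type*} (E E' : V → V → Prop)
    (lam lam' : V → V → ℕ) (F F' : V → V → Prop)
    (hEsymm : ∀ x y, E x y → E y x) (hE'symm : ∀ x y, E' x y → E' y x)
    (hlam : ∀ x y, lam x y = lam y x) (hlam' : ∀ x y, lam' x y = lam' y x)
    (hEsub : ∀ x y, E x y → E' x y)
    (hlamext : ∀ x y, E x y → lam' x y = lam x y)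
    (hFE : ∀ x y, F x y → E x y)
    (hproper : ∀ x y, E x y → (F x y ↔ ¬ F y x))
    (hFsub : ∀ x y, F x y → F' x y)
    (hF'E' : ∀ x y, F' x y → E' x y)
    (hproper' : ∀ x y, E' x y → (F' x y ↔ ¬ F' y x))
    (htrans' : ∀ a b c, F' a b → F' b c → lam' a b ≤ lam' b c →
      F' a c ∧ lam' b c ≤ lam' a c)
    (v u : V) (ℓ : ℕ) (hℓ : 2 ≤ ℓ) (p : ℕ → V)
    (hp0 : p 0 = v) (hpl : p ℓ = u)
    (hpath : ∀ i < ℓ, F (p i) (p (i + 1)))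
    (T : ℕ) (hT : lam (p (ℓ - 1)) (p ℓ) = T)
    (hheavy : ∀ i < ℓ, lam (p i) (p (i + 1)) ≤ T) :
    F' v u ∧ T ≤ lam' v u := by
  have key : ∀ k, 1 ≤ k → k ≤ ℓ → F' (p (ℓ - k)) (p ℓ) ∧ T ≤ lam' (p (ℓ - k)) (p ℓ) := by
    intro k
    induction k with
    | zero => omega
    | succ k ih =>
      intro _ hk
      by_cases hk1 : k = 0
      · subst hk1
        have h1 : ℓ - 1 < ℓ := by omega
        have hF := hpath (ℓ - 1) h1
        have he : ℓ - 1 + 1 = ℓ := by omega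
        rw [he] at hF
        refine ⟨hFsub _ _ hF, ?_⟩
        rw [hlamext _ _ (hFE _ _ hF), hT]
      · have hk1' : 1 ≤ k := by omega
        obtain ⟨hF', hlab⟩ := ih hk1' (by omega)
        have hlt : ℓ - (k + 1) < ℓ := by omega
        have hF := hpath (ℓ - (k + 1)) hlt
        have he : ℓ - (k + 1) + 1 = ℓ - k := by omega
        rw [he] at hF
        have hFsub' := hFsub _ _ hF
        have hlab' : lam' (p (ℓ - (k + 1))) (p (ℓ - k)) ≤ lam' (p (ℓ - k)) (p ℓ) := by
          rw [hlamext _ _ (hFE _ _ hF)]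
          have := hheavy (ℓ - (k + 1)) hlt
          rw [he] at this
          omega
        obtain ⟨h1, h2⟩ := htrans' _ _ _ hFsub' hF' hlab'
        exact ⟨h1, le_trans hlab h2⟩
  obtain ⟨h1, h2⟩ := key ℓ (by omega) le_rfl
  simp only [Nat.sub_self] at h1 h2
  rw [hp0, hpl] at h1 h2
  exact ⟨h1, h2⟩
end
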